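/- arXiv:2012.11770 — 4 statements merged into one kernel-verified Lean document; each statement's English description precedes it below -/
import Mathlib

section
/- If p and q are coprime positive integers with B(p,q) = (a,b), then b+q and a+p are coprime and B(b+q, a+p) = (q,p). -/
/-- If B(p,q) = (a,b) then b+q and a+p are coprime and
B(b+q, a+p) = (q,p). -/
theorem bezout_coefficients_shift (p q a b : ℤ) (hp : 0 < p) (hq : 0 < q)
    (hpq : IsCoprime p q)
    (ha : 0 < a) (hap : a ≤ p) (hb : 0 ≤ b) (hbq : b < q)
    (hbez : a * q - b * p = 1) :
    IsCoprime (b + q) (a + p) ∧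
      (0 < q ∧ q ≤ b + q ∧ 0 ≤ p ∧ p < a + p ∧ q * (a + p) - p * (b + q) = 1) := by
  refine ⟨⟨-p, q, by linarith [hbez]⟩, hq, by linarith, le_of_lt hp, by linarith, by linarith⟩
end

section
/- If p and q are coprime positive integers, then the Euclidean distance from B(p,q) to the point (p,q) equals the Euclidean distance from B(q,p) to the origin (0,0). -/
/-- The point (x,y) in the Euclidean plane. -/
noncomputable def V (x y : ℝ) : EuclideanSpace ℝ (Fin 2) := WithLp.toLp 2 ![x, y]

/-!
Swapping the roles of `p` and `q`, the pair `(q - b, p - a)` satisfies the Bézout equation for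
`(q, p)` and lies in the normalising range, so by uniqueness `B(q, p) = (q - b, p - a)`. Hence
`B(p, q) - (p, q) = -(d, c)`, which has the same length as `B(q, p) = (c, d)`.
-/

theorem bezout_coeff_unique {p q c d c' d' : ℤ} (hc : 0 < c) (hcq : c ≤ q) (hc' : 0 < c')
    (hc'q : c' ≤ q) (h : c * p - d * q = 1) (h' : c' * p - d' * q = 1) : c = c' ∧ d = d' := by
  have hcop : IsCoprime q p := ⟨-d, c, by linear_combination h⟩
  have hdvd : q ∣ c - c' :=
    hcop.dvd_of_dvd_mul_right ⟨d - d', by linear_combination h - h'⟩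
  have hcc' : c = c' := by
    have hlt : |c - c'| < q := abs_sub_lt_iff.mpr ⟨by linarith, by linarith⟩
    linarith [Int.eq_zero_of_abs_lt_dvd hdvd hlt]
  subst hcc'
  refine ⟨rfl, ?_⟩
  have hq : q ≠ 0 := by omega
  exact mul_right_cancel₀ hq (by linarith)

theorem dist_V (x y x' y' : ℝ) : dist (V x y) (V x' y') = √((x - x') ^ 2 + (y - y') ^ 2) := by
  simp [EuclideanSpace.dist_eq, V, Fin.sum_univ_two, Real.dist_eq, sq_abs]

theorem bezout_dist_eq_general (p q a b c d : ℤ)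
    (hb : 0 ≤ b) (hbq : b < q)
    (hbez : a * q - b * p = 1)
    (hc : 0 < c) (hcq : c ≤ q)
    (hbez' : c * p - d * q = 1) :
    ‖V (a : ℝ) (b : ℝ) - V (p : ℝ) (q : ℝ)‖ = ‖V (c : ℝ) (d : ℝ) - V 0 0‖ := by
  obtain ⟨rfl, rfl⟩ : c = q - b ∧ d = p - a :=
    bezout_coeff_unique hc hcq (by omega) (by omega) hbez' (by linear_combination hbez)
  rw [← dist_eq_norm, ← dist_eq_norm, dist_V, dist_V]
  push_cast
  ring_nf

/-- the distance from B(p,q) to (p,q) equals the distance from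
B(q,p) to the origin. Here (a,b) = B(p,q) and (c,d) = B(q,p). -/
theorem bezout_dist_eq (p q a b c d : ℤ) (hp : 0 < p) (hq : 0 < q)
    (hpq : IsCoprime p q)
    (ha : 0 < a) (hap : a ≤ p) (hb : 0 ≤ b) (hbq : b < q)
    (hbez : a * q - b * p = 1)
    (hc : 0 < c) (hcq : c ≤ q) (hd : 0 ≤ d) (hdp : d < p)
    (hbez' : c * p - d * q = 1) :
    ‖V (a : ℝ) (b : ℝ) - V (p : ℝ) (q : ℝ)‖ = ‖V (c : ℝ) (d : ℝ) - V 0 0‖ :=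
  bezout_dist_eq_general p q a b c d hb hbq hbez hc hcq hbez'
end

section
/- Let p and q be coprime positive integers. Then the distance from (p,q) to the orthogonal projection of B(p,q) onto the line spanned by (p,q) equals the distance from the origin to the orthogonal projection of B(q,p) onto the line spanned by (q,p). -/
/-!
With `k = ac - bd`, the two Bézout relations give `c + b = kq` and `a + d = kp`, and
`0 < c + b < 2q` forces `k = 1`, so `B(q,p) = (q - b, p - a)`. Since `u` lies on `ℝ ∙ u`, the
distance from `u` to the projection of `w` is the norm of the projection of `u - w`, and the
projection of `x` on `ℝ ∙ u` has norm `|⟪u, x⟫| / ‖u‖`. Both distances are therefore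
`|p (p - a) + q (q - b)| / ‖(p, q)‖`.
-/

open scoped InnerProductSpace

section BezoutPartner

variable {p q a b c d : ℤ}

theorem add_eq_mul_of_bezout (hab : a * q - b * p = 1) (hcd : c * p - d * q = 1) :
    c + b = (a * c - b * d) * q ∧ a + d = (a * c - b * d) * p :=
  ⟨by linear_combination -c * hab - b * hcd, by linear_combination -a * hcd - d * hab⟩

theorem Int.eq_one_of_mul_pos_of_mul_lt_two_mul {k q : ℤ} (h0 : 0 < k * q)
    (h2 : k * q < 2 * q) : k = 1 := by
  rcases lt_trichotomy q 0 with hq | rfl | hq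
  · nlinarith
  · simp at h0
  · have : 0 < k := pos_of_mul_pos_left h0 hq.le
    have : k < 2 := lt_of_mul_lt_mul_right h2 hq.le
    omega

theorem bezout_partner_eq (hab : a * q - b * p = 1) (hcd : c * p - d * q = 1)
    (hc : 0 < c) (hcq : c ≤ q) (hb : 0 ≤ b) (hbq : b < q) : c = q - b ∧ d = p - a := by
  obtain ⟨hcb, had⟩ := add_eq_mul_of_bezout hab hcd
  have hk : a * c - b * d = 1 :=
    Int.eq_one_of_mul_pos_of_mul_lt_two_mul (by rw [← hcb]; omega) (by rw [← hcb]; omega)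
  rw [hk, one_mul] at hcb had
  constructor <;> linarith

end BezoutPartner

section ProjectionOnLine

variable {E : Type*} [NormedAddCommGroup E] [InnerProductSpace ℝ E]

theorem norm_starProjection_span_singleton (v w : E) :
    ‖(ℝ ∙ v).starProjection w‖ = |⟪v, w⟫_ℝ| / ‖v‖ := by
  rcases eq_or_ne v 0 with rfl | hv
  · simp
  have hv' : ‖v‖ ≠ 0 := norm_ne_zero_iff.mpr hv
  rw [Submodule.starProjection_singleton, norm_smul, Real.norm_eq_abs, abs_div,
    RCLike.ofReal_real_eq_id, id_eq, abs_of_nonneg (sq_nonneg ‖v‖)]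
  field_simp

theorem dist_starProjection_span_singleton (v w : E) :
    dist v ((ℝ ∙ v).starProjection w) = |⟪v, v - w⟫_ℝ| / ‖v‖ := by
  rw [dist_eq_norm, ← norm_starProjection_span_singleton, map_sub,
    Submodule.starProjection_eq_self_iff.mpr (Submodule.mem_span_singleton_self v)]

end ProjectionOnLine

theorem inner_V (x y z w : ℝ) : ⟪V x y, V z w⟫_ℝ = x * z + y * w := by
  simp only [V, EuclideanSpace.inner_eq_star_dotProduct, star_trivial, Matrix.dotProduct_cons,
    Matrix.head_cons, Matrix.tail_cons, Matrix.dotProduct_of_isEmpty, add_zero]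
  ring

theorem norm_V (x y : ℝ) : ‖V x y‖ = √(x ^ 2 + y ^ 2) := by
  simp [V, EuclideanSpace.norm_eq, Fin.sum_univ_two, sq]

theorem bezout_projection_dist_general (p q a b c d : ℤ)
    (hb : 0 ≤ b) (hbq : b < q)
    (hbez : a * q - b * p = 1)
    (hc : 0 < c) (hcq : c ≤ q)
    (hbez' : c * p - d * q = 1) :
    dist (V (p : ℝ) (q : ℝ))
        ((Submodule.orthogonalProjectionOnto (ℝ ∙ V (p : ℝ) (q : ℝ)) (V (a : ℝ) (b : ℝ)) :
          EuclideanSpace ℝ (Fin 2)))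
      = dist (0 : EuclideanSpace ℝ (Fin 2))
        ((Submodule.orthogonalProjectionOnto (ℝ ∙ V (q : ℝ) (p : ℝ)) (V (c : ℝ) (d : ℝ)) :
          EuclideanSpace ℝ (Fin 2))) := by
  obtain ⟨rfl, rfl⟩ := bezout_partner_eq hbez hbez' hc hcq hb hbq
  rw [← Submodule.starProjection_apply, ← Submodule.starProjection_apply,
    dist_starProjection_span_singleton, dist_zero_left, norm_starProjection_span_singleton,
    inner_sub_right, inner_V, inner_V, inner_V, norm_V, norm_V, add_comm ((q : ℝ) ^ 2)]
  push_cast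
  ring_nf

/-- the distance from (p,q) to the projection of B(p,q) on the line
spanned by (p,q) equals the distance from the origin to the projection of B(q,p)
on the line spanned by (q,p). Here (a,b) = B(p,q), (c,d) = B(q,p). -/
theorem bezout_projection_dist (p q a b c d : ℤ) (hp : 0 < p) (hq : 0 < q)
    (hpq : IsCoprime p q)
    (ha : 0 < a) (hap : a ≤ p) (hb : 0 ≤ b) (hbq : b < q)
    (hbez : a * q - b * p = 1)
    (hc : 0 < c) (hcq : c ≤ q) (hd : 0 ≤ d) (hdp : d < p)
    (hbez' : c * p - d * q = 1) :
    dist (V (p : ℝ) (q : ℝ))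
        ((Submodule.orthogonalProjectionOnto (ℝ ∙ V (p : ℝ) (q : ℝ)) (V (a : ℝ) (b : ℝ)) :
          EuclideanSpace ℝ (Fin 2)))
      = dist (0 : EuclideanSpace ℝ (Fin 2))
        ((Submodule.orthogonalProjectionOnto (ℝ ∙ V (q : ℝ) (p : ℝ)) (V (c : ℝ) (d : ℝ)) :
          EuclideanSpace ℝ (Fin 2))) :=
  bezout_projection_dist_general p q a b c d hb hbq hbez hc hcq hbez'
end

section
/- Let p > 3 and 0 ≤ q < p be integers and let 1 ≤ ε ≤ ‖(p,q)‖/2 be a real number. If (r,s) is a pair of coprime positive integers with ‖(r,s)−(p,q)‖ ≤ ε, then setting t₀ = 1 − (B(r,s)·(r,s))/‖(r,s)‖², one has ‖B(s,r) − t₀·(q,p)‖ < ε + 1. -/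
open scoped InnerProductSpace

/-!
Write `x = (r,s)`, `u = B(r,s) = (a,b)` and `λ = u·x/‖x‖²`, so `t₀ = 1 - λ`. Uniqueness of
Bézout coefficients gives `B(s,r) = (s - b, r - a)`, which is `x - u` with its coordinates
swapped. Hence, up to that swap,
`B(s,r) - t₀ (q,p) = t₀ (x - (p,q)) + (λ x - u)`.
The first term has norm at most `ε` because `0 ≤ λ ≤ 1`; the second is the component of `u`
orthogonal to `x`, of norm `|det(u,x)|/‖x‖ = 1/‖x‖ < 1`.
-/

theorem eq_sub_of_bezout_of_bezout {r s a b c d : ℤ} (hab : a * s - b * r = 1)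
    (hcd : c * r - d * s = 1) (hc : 0 < c) (hcs : c ≤ s) (hb : 0 ≤ b) (hbs : b < s) :
    c = s - b ∧ d = r - a := by
  have hcop : IsCoprime s r := ⟨-d, c, by linarith⟩
  have hsum : (c + b) * r = (d + a) * s := by linear_combination hcd - hab
  have hdvd : s ∣ c + b - s :=
    dvd_sub (hcop.dvd_of_dvd_mul_right ⟨d + a, by rw [hsum, mul_comm]⟩) dvd_rfl
  have hcb : c + b - s = 0 := Int.eq_zero_of_abs_lt_dvd hdvd (abs_lt.mpr ⟨by omega, by omega⟩)
  refine ⟨by omega, ?_⟩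
  have hda : s * (d + a - r) = 0 := by linear_combination -hsum + r * hcb
  have := (mul_eq_zero.mp hda).resolve_left (by omega)
  omega

theorem norm_sub_sub_smul_le {E : Type*} [SeminormedAddCommGroup E] [NormedSpace ℝ E]
    (x y u : E) (t : ℝ) : ‖x - u - t • y‖ ≤ |t| * ‖x - y‖ + ‖(1 - t) • x - u‖ :=
  calc ‖x - u - t • y‖ = ‖t • (x - y) + ((1 - t) • x - u)‖ := by congr 1; module
    _ ≤ ‖t • (x - y)‖ + ‖(1 - t) • x - u‖ := norm_add_le _ _
    _ = |t| * ‖x - y‖ + ‖(1 - t) • x - u‖ := by rw [norm_smul, Real.norm_eq_abs]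

theorem V_sub (x y z w : ℝ) : V x y - V z w = V (x - z) (y - w) := by
  ext i; fin_cases i <;> simp [V]

theorem V_smul (t x y : ℝ) : t • V x y = V (t * x) (t * y) := by
  ext i; fin_cases i <;> simp [V]

theorem norm_V_sq (x y : ℝ) : ‖V x y‖ ^ 2 = x ^ 2 + y ^ 2 := by
  rw [norm_V, Real.sq_sqrt (by positivity)]

theorem norm_V_comm (x y : ℝ) : ‖V x y‖ = ‖V y x‖ := by
  rw [norm_V, norm_V, add_comm]

theorem one_lt_norm_V {x y : ℝ} (hx : 1 ≤ x) (hy : 1 ≤ y) : 1 < ‖V x y‖ := by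
  rw [norm_V, Real.lt_sqrt zero_le_one]
  nlinarith

theorem norm_inner_div_smul_sub_V_mul_norm (a b r s : ℝ) :
    ‖(⟪V a b, V r s⟫_ℝ / ‖V r s‖ ^ 2) • V r s - V a b‖ * ‖V r s‖ = |a * s - b * r| := by
  rcases eq_or_ne (r ^ 2 + s ^ 2) 0 with h | h
  · obtain ⟨rfl, rfl⟩ : r = 0 ∧ s = 0 := ⟨by nlinarith, by nlinarith⟩
    simp [norm_V]
  rw [inner_V, norm_V_sq, V_smul, V_sub, norm_V, norm_V, ← Real.sqrt_mul (by positivity),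
    ← Real.sqrt_sq_eq_abs]
  congr 1
  field_simp
  ring

theorem abs_one_sub_inner_div_norm_sq_V_le_one {a b r s : ℝ} (ha : 0 ≤ a) (har : a ≤ r)
    (hb : 0 ≤ b) (hbs : b ≤ s) : |1 - ⟪V a b, V r s⟫_ℝ / ‖V r s‖ ^ 2| ≤ 1 := by
  have hinner : 0 ≤ ⟪V a b, V r s⟫_ℝ := by
    rw [inner_V]; exact add_nonneg (mul_nonneg ha (ha.trans har)) (mul_nonneg hb (hb.trans hbs))
  have hle : ⟪V a b, V r s⟫_ℝ ≤ ‖V r s‖ ^ 2 := by rw [inner_V, norm_V_sq]; nlinarith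
  rw [abs_le]
  constructor
  · linarith [div_le_one_of_le₀ hle (sq_nonneg _)]
  · linarith [div_nonneg hinner (sq_nonneg ‖V r s‖)]

/-- Here `(a,b) = B(r,s)` and `(c,d) = B(s,r)`. -/
theorem bezout_approx_beta_general (p q r s a b c d : ℤ) (ε : ℝ)
    (hr : 0 < r) (hs : 0 < s)
    (ha : 0 < a) (har : a ≤ r) (hb : 0 ≤ b) (hbs : b < s)
    (hbez : a * s - b * r = 1)
    (hc : 0 < c) (hcs : c ≤ s)
    (hbez' : c * r - d * s = 1)
    (hclose : ‖V (r : ℝ) (s : ℝ) - V (p : ℝ) (q : ℝ)‖ ≤ ε)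
    (t₀ : ℝ)
    (ht₀ : t₀ = 1 - ⟪V (a : ℝ) (b : ℝ), V (r : ℝ) (s : ℝ)⟫_ℝ / ‖V (r : ℝ) (s : ℝ)‖ ^ 2) :
    ‖V (c : ℝ) (d : ℝ) - t₀ • V (q : ℝ) (p : ℝ)‖ < ε + 1 := by
  obtain ⟨rfl, rfl⟩ := eq_sub_of_bezout_of_bezout hbez hbez' hc hcs hb hbs
  have ht : |t₀| ≤ 1 := ht₀ ▸ abs_one_sub_inner_div_norm_sq_V_le_one (by exact_mod_cast ha.le)
    (by exact_mod_cast har) (by exact_mod_cast hb) (by exact_mod_cast hbs.le)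
  have hx : 1 < ‖V (r : ℝ) (s : ℝ)‖ := one_lt_norm_V (by exact_mod_cast hr) (by exact_mod_cast hs)
  have hproj : 1 - t₀ = ⟪V (b : ℝ) (a : ℝ), V (s : ℝ) (r : ℝ)⟫_ℝ / ‖V (s : ℝ) (r : ℝ)‖ ^ 2 := by
    rw [ht₀, inner_V, inner_V, norm_V_comm (s : ℝ)]; ring
  have hperp : ‖(1 - t₀) • V (s : ℝ) (r : ℝ) - V (b : ℝ) (a : ℝ)‖ = 1 / ‖V (r : ℝ) (s : ℝ)‖ := by
    rw [eq_div_iff (by positivity), norm_V_comm (r : ℝ), hproj,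
      norm_inner_div_smul_sub_V_mul_norm, ← neg_sub, abs_neg]
    exact_mod_cast congrArg abs hbez
  calc ‖V ((s - b : ℤ) : ℝ) ((r - a : ℤ) : ℝ) - t₀ • V (q : ℝ) (p : ℝ)‖
      = ‖V (s : ℝ) (r : ℝ) - V (b : ℝ) (a : ℝ) - t₀ • V (q : ℝ) (p : ℝ)‖ := by
        rw [V_sub]; push_cast; rfl
    _ ≤ |t₀| * ‖V (s : ℝ) (r : ℝ) - V (q : ℝ) (p : ℝ)‖
        + ‖(1 - t₀) • V (s : ℝ) (r : ℝ) - V (b : ℝ) (a : ℝ)‖ := norm_sub_sub_smul_le _ _ _ _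
    _ < ε + 1 := by
      rw [hperp, V_sub, norm_V_comm, ← V_sub]
      have hclose' := (mul_le_of_le_one_left (norm_nonneg _) ht).trans hclose
      have hinv : 1 / ‖V (r : ℝ) (s : ℝ)‖ < 1 := (div_lt_one (by positivity)).mpr hx
      linarith

/-- with t₀ = 1 − (B(r,s)·(r,s))/‖(r,s)‖², one has
‖B(s,r) − t₀·(q,p)‖ < ε + 1. Here (a,b) = B(r,s) and (c,d) = B(s,r). -/
theorem bezout_approx_beta (p q r s a b c d : ℤ) (hp : 3 < p) (hq0 : 0 ≤ q) (hqp : q < p)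
    (ε : ℝ) (hε1 : 1 ≤ ε) (hε2 : ε ≤ ‖V (p : ℝ) (q : ℝ)‖ / 2)
    (hr : 0 < r) (hs : 0 < s) (hrs : IsCoprime r s)
    (ha : 0 < a) (har : a ≤ r) (hb : 0 ≤ b) (hbs : b < s)
    (hbez : a * s - b * r = 1)
    (hc : 0 < c) (hcs : c ≤ s) (hd : 0 ≤ d) (hdr : d < r)
    (hbez' : c * r - d * s = 1)
    (hclose : ‖V (r : ℝ) (s : ℝ) - V (p : ℝ) (q : ℝ)‖ ≤ ε)
    (t₀ : ℝ)
    (ht₀ : t₀ = 1 - ⟪V (a : ℝ) (b : ℝ), V (r : ℝ) (s : ℝ)⟫_ℝ / ‖V (r : ℝ) (s : ℝ)‖ ^ 2) :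
    ‖V (c : ℝ) (d : ℝ) - t₀ • V (q : ℝ) (p : ℝ)‖ < ε + 1 :=
  bezout_approx_beta_general p q r s a b c d ε hr hs ha har hb hbs hbez hc hcs hbez' hclose t₀ ht₀
end
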